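/- Among all lists of the same length, insertion sort makes the fewest comparisons on already-sorted lists: for all lists x1 and x2, if x1 is sorted and |x1| = |x2|, then the number of comparisons (isort x1).2 is at most (isort x2).2. -/

import Mathlib

def insertC (x : ℕ) : List ℕ → List ℕ × ℕ
  | [] => ([x], 0)
  | h :: t =>
    if x ≤ h then (x :: h :: t, 1)
    else let s := insertC x t; (h :: s.1, 1 + s.2)

def isortC : List ℕ → List ℕ × ℕ
  | [] => ([], 0)
  | h :: t =>
    let s := isortC t
    let s' := insertC h s.1
    (s'.1, s.2 + s'.2)

noncomputable def lmin : List ℕ → ℕ∞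
  | [] => ⊤
  | h :: t => min (h : ℕ∞) (lmin t)

def sorted : List ℕ → Prop
  | [] => True
  | h :: t => sorted t ∧ (h : ℕ∞) ≤ lmin t


/-! Inserting into a nonempty list costs at least one comparison, so sorting any list of
length `n` costs at least `n - 1`. On a sorted list every insertion stops at its first
comparison, so the cost is exactly `n - 1`. -/

theorem length_insertC_fst (x : ℕ) (l : List ℕ) : (insertC x l).1.length = l.length + 1 := by
  induction l with
  | nil => rfl
  | cons h t ih =>
    simp only [insertC]
    split <;> simp [ih]

theorem length_isortC_fst (l : List ℕ) : (isortC l).1.length = l.length := by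
  induction l with
  | nil => rfl
  | cons h t ih => simp [isortC, length_insertC_fst, ih]

theorem one_le_insertC_snd (x : ℕ) {l : List ℕ} (hl : l ≠ []) : 1 ≤ (insertC x l).2 := by
  obtain ⟨h, t, rfl⟩ := List.exists_cons_of_ne_nil hl
  simp only [insertC]
  split <;> simp

theorem length_sub_one_le_isortC_snd (l : List ℕ) : l.length - 1 ≤ (isortC l).2 := by
  induction l with
  | nil => simp
  | cons h t ih =>
    rcases t with _ | ⟨a, t⟩
    · simp
    have hne : (isortC (a :: t)).1 ≠ [] := by
      simp [← List.length_pos_iff, length_isortC_fst]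
    have hinsert := one_le_insertC_snd h hne
    have hunfold : (isortC (h :: a :: t)).2 =
        (isortC (a :: t)).2 + (insertC h (isortC (a :: t)).1).2 := rfl
    simp only [List.length_cons] at ih ⊢
    omega

theorem le_of_sorted_cons_cons {h a : ℕ} {t : List ℕ} (hs : sorted (h :: a :: t)) : h ≤ a := by
  exact_mod_cast hs.2.trans (min_le_left _ _)

theorem isortC_of_sorted {l : List ℕ} (hs : sorted l) : isortC l = (l, l.length - 1) := by
  induction l with
  | nil => rfl
  | cons h t ih =>
    simp only [isortC, ih hs.1]
    rcases t with _ | ⟨a, t⟩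
    · rfl
    · simp [insertC, le_of_sorted_cons_cons hs]

theorem isort_sorted_min_cost (x1 x2 : List ℕ)
    (h1 : sorted x1) (h2 : x1.length = x2.length) :
    (isortC x1).2 ≤ (isortC x2).2 := by
  rw [isortC_of_sorted h1, h2]
  exact length_sub_one_le_isortC_snd x2
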